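/- Let 1<p<∞, -n < ϱ < -n/p, and α > n/p'. Then the weighted Lebesgue space L_p(ℝ^n, w_α) embeds continuously into H^ϱ L_p(ℝ^n): there is C such that ‖f‖_{H^ϱ L_p(ℝ^n)} ≤ C ‖w_α f‖_{L_p(ℝ^n)} for all f with w_α f ∈ L_p(ℝ^n), where w_α(x) = (1+|x|²)^{α/2}. -/

import Mathlib

open MeasureTheory ENNReal

/-- Index set for the dyadic cubes `Q_{J,M}`. -/
abbrev DyadicIdx (n : ℕ) := ℤ × (Fin n → ℤ)

/-- The dyadic cube `Q_{J,M} = 2^{-J}(M + [-1,1]^n)`. -/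
def dyadicCube (n : ℕ) (i : DyadicIdx n) : Set (EuclideanSpace ℝ (Fin n)) :=
  {x | ∀ k, |(2 : ℝ) ^ i.1 * x k - i.2 k| ≤ 1}

/-- The Morrey norm of `L_p^r(ℝⁿ)`, in its dyadic-cube form. -/
noncomputable def morreyNormC (n : ℕ) (p r : ℝ)
    (g : EuclideanSpace ℝ (Fin n) → ℝ≥0∞) : ℝ≥0∞ :=
  ⨆ i : DyadicIdx n,
    ENNReal.ofReal ((2 : ℝ) ^ ((i.1 : ℝ) * ((n : ℝ) / p + r))) *
      (∫⁻ x in dyadicCube n i, g x ^ p) ^ (1 / p)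

/-- `(lam, a)` is an admissible representation of `h` as an element of the
predual Morrey space `H^ϱ L_p(ℝⁿ)`. -/
def IsHRep (n : ℕ) (p ϱ : ℝ) (h : EuclideanSpace ℝ (Fin n) → ℝ)
    (lam : DyadicIdx n → ℝ) (a : DyadicIdx n → EuclideanSpace ℝ (Fin n) → ℝ) : Prop :=
  (∀ i, tsupport (a i) ⊆ dyadicCube n i) ∧
  (∀ i, eLpNorm (a i) (ENNReal.ofReal p) volume
      ≤ ENNReal.ofReal ((2 : ℝ) ^ (-(i.1 : ℝ) * ((n : ℝ) / p + ϱ)))) ∧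
  Summable (fun i => |lam i|) ∧
  (∀ᵐ x ∂(volume : Measure (EuclideanSpace ℝ (Fin n))), h x = ∑' i, lam i * a i x)

/-- The norm of the predual Morrey space `H^ϱ L_p(ℝⁿ)` (`= ∞` if no representation exists). -/
noncomputable def HNorm (n : ℕ) (p ϱ : ℝ) (h : EuclideanSpace ℝ (Fin n) → ℝ) : ℝ≥0∞ :=
  sInf {s | ∃ lam a, IsHRep n p ϱ h lam a ∧ s = ENNReal.ofReal (∑' i, |lam i|)}

/-!
Unit-scale atoms suffice: for `J = 0` the size condition on an atom is just `‖a‖_p ≤ 1`.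
Cutting `f` along the half-open unit cubes `Q_M = ⌊·⌋⁻¹{M}`, the normalised pieces
`f 1_{Q_M} / ‖f 1_{Q_M}‖_p` are admissible atoms, so `‖f‖_{H^ϱ L_p} ≤ ∑_M ‖f 1_{Q_M}‖_p`.
On `Q_M` the weight `w_α` is comparable to `(1 + |M|²)^{α/2}`, and Hölder's inequality in `M`
bounds this sum by `(∑_M (1 + |M|²)^{-αp'/2})^{1/p'} ‖w_α f‖_p`. The lattice sum converges
because `αp' > n`, comparing it with the `n`-th power of `∑_{m ∈ ℤ} (1 + m²)^{-αp'/(2n)}`.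
-/

theorem ENNReal.tsum_fin_pi_prod {α : Type*} (h : α → ℝ≥0∞) (n : ℕ) :
    ∑' M : Fin n → α, ∏ k, h (M k) = (∑' a, h a) ^ n := by
  induction n with
  | zero => simp
  | succ n ih =>
    rw [← (Fin.consEquiv fun _ => α).tsum_eq, ENNReal.tsum_prod', pow_succ', ← ih,
      ← ENNReal.tsum_mul_right]
    refine tsum_congr fun a => ?_
    rw [← ENNReal.tsum_mul_left]
    refine tsum_congr fun M => ?_
    simp [Fin.prod_univ_succ]

theorem ENNReal.tsum_mul_le_Lp_mul_Lq {ι : Type*} {p q : ℝ} (hpq : p.HolderConjugate q)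
    (f g : ι → ℝ≥0∞) :
    ∑' i, f i * g i ≤ (∑' i, f i ^ p) ^ (1 / p) * (∑' i, g i ^ q) ^ (1 / q) := by
  let _ : MeasurableSpace ι := ⊤
  simpa only [Pi.mul_apply, lintegral_count] using
    ENNReal.lintegral_mul_le_Lp_mul_Lq Measure.count hpq
      (Measurable.of_discrete (f := f)).aemeasurable (Measurable.of_discrete (f := g)).aemeasurable

theorem summable_one_add_sq_int_rpow_neg {t : ℝ} (ht : 1 / 2 < t) :
    Summable fun m : ℤ => (1 + (m : ℝ) ^ 2) ^ (-t) := by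
  refine .of_norm_bounded_eventually (Real.summable_abs_int_rpow (b := 2 * t) (by linarith)) ?_
  filter_upwards [Filter.eventually_cofinite_ne 0] with m hm
  have hm2 : 0 < (m : ℝ) ^ 2 := by positivity
  rw [Real.norm_of_nonneg (by positivity), show -(2 * t) = 2 * -t by ring,
    Real.rpow_mul (abs_nonneg _), Real.rpow_two, sq_abs]
  exact Real.rpow_le_rpow_of_nonpos hm2 (by linarith) (by linarith)

theorem one_add_sum_sq_rpow_neg_le_prod {n : ℕ} {s t : ℝ} (ht : 0 ≤ t) (hst : n * t ≤ s)
    (x : Fin n → ℝ) :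
    (1 + ∑ k, x k ^ 2) ^ (-s) ≤ ∏ k, (1 + x k ^ 2) ^ (-t) := by
  have hQ : 1 ≤ 1 + ∑ k, x k ^ 2 := le_add_of_nonneg_right (by positivity)
  have hprod : ∏ k, (1 + x k ^ 2) ≤ (1 + ∑ k, x k ^ 2) ^ n := by
    calc ∏ k, (1 + x k ^ 2) ≤ ∏ _k : Fin n, (1 + ∑ k, x k ^ 2) :=
          Finset.prod_le_prod (fun k _ => by positivity) fun k _ => by
            gcongr
            exact Finset.single_le_sum (fun k _ => sq_nonneg (x k)) (Finset.mem_univ k)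
      _ = (1 + ∑ k, x k ^ 2) ^ n := by simp
  calc (1 + ∑ k, x k ^ 2) ^ (-s) ≤ (1 + ∑ k, x k ^ 2) ^ (-(n * t)) :=
        Real.rpow_le_rpow_of_exponent_le hQ (by linarith)
    _ = ((1 + ∑ k, x k ^ 2) ^ n) ^ (-t) := by
        rw [← Real.rpow_natCast, ← Real.rpow_mul (by positivity), mul_neg]
    _ ≤ (∏ k, (1 + x k ^ 2)) ^ (-t) :=
        Real.rpow_le_rpow_of_nonpos (by positivity) hprod (by linarith)
    _ = ∏ k, (1 + x k ^ 2) ^ (-t) :=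
        (Real.finsetProd_rpow _ _ (fun k _ => by positivity) _).symm

theorem tsum_ofReal_one_add_sum_sq_int_rpow_neg_ne_top {n : ℕ} {s : ℝ} (hs : n / 2 < s) :
    ∑' M : Fin n → ℤ, ENNReal.ofReal ((1 + ∑ k, (M k : ℝ) ^ 2) ^ (-s)) ≠ ∞ := by
  obtain ⟨t, ht, hts⟩ : ∃ t : ℝ, 1 / 2 < t ∧ n * t ≤ s := by
    rcases n.eq_zero_or_pos with rfl | hn
    · exact ⟨1, by norm_num, by simp at hs ⊢; linarith⟩
    · refine ⟨s / n, ?_, (mul_div_cancel₀ _ (by positivity)).le⟩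
      rw [lt_div_iff₀ (by positivity)]
      linarith
  have hle : ∀ M : Fin n → ℤ, ENNReal.ofReal ((1 + ∑ k, (M k : ℝ) ^ 2) ^ (-s)) ≤
      ∏ k, ENNReal.ofReal ((1 + (M k : ℝ) ^ 2) ^ (-t)) := fun M => by
    rw [← ENNReal.ofReal_prod_of_nonneg fun k _ => by positivity]
    exact ENNReal.ofReal_le_ofReal
      (one_add_sum_sq_rpow_neg_le_prod (by linarith) hts fun k => (M k : ℝ))
  refine ne_top_of_le_ne_top ?_ (ENNReal.tsum_le_tsum hle)
  rw [ENNReal.tsum_fin_pi_prod fun m : ℤ => ENNReal.ofReal ((1 + (m : ℝ) ^ 2) ^ (-t)),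
    ← ENNReal.ofReal_tsum_of_nonneg (fun m => by positivity)
      (summable_one_add_sq_int_rpow_neg ht)]
  exact ENNReal.pow_ne_top ENNReal.ofReal_ne_top

section UnitCubes

variable {n : ℕ}

def unitCube (M : Fin n → ℤ) : Set (EuclideanSpace ℝ (Fin n)) :=
  {x | ∀ k, ⌊x k⌋ = M k}

theorem mem_unitCube_floor (x : EuclideanSpace ℝ (Fin n)) : x ∈ unitCube fun k => ⌊x k⌋ :=
  fun _ => rfl

theorem eq_of_mem_unitCube {x : EuclideanSpace ℝ (Fin n)} {M M' : Fin n → ℤ}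
    (hM : x ∈ unitCube M) (hM' : x ∈ unitCube M') : M = M' :=
  funext fun k => (hM k).symm.trans (hM' k)

theorem pairwise_disjoint_unitCube : Pairwise (Function.onFun Disjoint (unitCube (n := n))) :=
  fun _ _ hne => Set.disjoint_left.2 fun _ hM hM' => hne (eq_of_mem_unitCube hM hM')

theorem iUnion_unitCube : ⋃ M : Fin n → ℤ, unitCube M = Set.univ :=
  Set.eq_univ_of_forall fun x => Set.mem_iUnion.2 ⟨_, mem_unitCube_floor x⟩

theorem measurableSet_unitCube (M : Fin n → ℤ) : MeasurableSet (unitCube M) := by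
  simp only [unitCube, Set.ofPred_forall]
  exact .iInter fun k => measurableSet_eq_fun
    (by fun_prop : Measurable fun x : EuclideanSpace ℝ (Fin n) => x k).floor measurable_const

theorem isClosed_dyadicCube (i : DyadicIdx n) : IsClosed (dyadicCube n i) := by
  simp only [dyadicCube, Set.ofPred_forall]
  exact isClosed_iInter fun k => isClosed_le (by fun_prop) continuous_const

theorem unitCube_subset_dyadicCube (M : Fin n → ℤ) : unitCube M ⊆ dyadicCube n (0, M) := by
  intro x hx k
  show |(2 : ℝ) ^ (0 : ℤ) * x k - (M k : ℝ)| ≤ 1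
  rw [← hx k, zpow_zero, one_mul, abs_le]
  constructor <;> linarith [Int.floor_le (x k), Int.lt_floor_add_one (x k)]

theorem one_add_sum_sq_le_of_mem_unitCube {M : Fin n → ℤ} {x : EuclideanSpace ℝ (Fin n)}
    (hx : x ∈ unitCube M) : 1 + ∑ k, (M k : ℝ) ^ 2 ≤ (2 + 2 * n) * (1 + ‖x‖ ^ 2) := by
  have hcoord : ∀ k, (M k : ℝ) ^ 2 ≤ 2 * x k ^ 2 + 2 := fun k => by
    rw [← hx k]
    nlinarith [Int.floor_le (x k), Int.lt_floor_add_one (x k), sq_nonneg (x k + 1)]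
  have hsum : ∑ k, (M k : ℝ) ^ 2 ≤ 2 * ‖x‖ ^ 2 + 2 * n := by
    calc ∑ k, (M k : ℝ) ^ 2 ≤ ∑ k, (2 * x k ^ 2 + 2) :=
          Finset.sum_le_sum fun k _ => hcoord k
      _ = 2 * ‖x‖ ^ 2 + 2 * n := by
        simp [Finset.sum_add_distrib, ← Finset.mul_sum, EuclideanSpace.norm_sq_eq, mul_comm]
  nlinarith [sq_nonneg ‖x‖]

end UnitCubes

open Function in
theorem HNorm_le_of_levelZero_rep {n : ℕ} {p ϱ : ℝ} {f : EuclideanSpace ℝ (Fin n) → ℝ}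
    (c : (Fin n → ℤ) → ℝ) (a : (Fin n → ℤ) → EuclideanSpace ℝ (Fin n) → ℝ)
    (ha_supp : ∀ M, tsupport (a M) ⊆ dyadicCube n (0, M))
    (ha_norm : ∀ M, eLpNorm (a M) (ENNReal.ofReal p) volume ≤ 1)
    (hc : Summable fun M => |c M|)
    (hf : ∀ᵐ x ∂volume, f x = ∑' M, c M * a M x) :
    HNorm n p ϱ f ≤ ENNReal.ofReal (∑' M, |c M|) := by
  set ι : (Fin n → ℤ) → DyadicIdx n := Prod.mk 0
  have hι : Injective ι := Prod.mk_right_injective 0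
  have h_abs : (fun i => |extend ι c 0 i|) = extend ι (fun M => |c M|) 0 := by
    ext i
    rcases em (∃ M, ι M = i) with ⟨M, rfl⟩ | hi
    · simp [hι.extend_apply]
    · simp [extend_apply' _ _ _ hi]
  refine sInf_le ⟨extend ι c 0, extend ι a 0, ⟨fun i => ?_, fun i => ?_, ?_, ?_⟩, ?_⟩
  · rcases em (∃ M, ι M = i) with ⟨M, rfl⟩ | hi
    · simpa [hι.extend_apply] using ha_supp M
    · simp [extend_apply' _ _ _ hi]
  · rcases em (∃ M, ι M = i) with ⟨M, rfl⟩ | hi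
    · simpa [hι.extend_apply, ι] using ha_norm M
    · simp [extend_apply' _ _ _ hi]
  · rw [h_abs]
    exact (summable_extend_zero hι).2 hc
  · filter_upwards [hf] with x hx
    rw [hx, ← tsum_extend_zero hι]
    refine tsum_congr fun i => ?_
    rcases em (∃ M, ι M = i) with ⟨M, rfl⟩ | hi
    · simp [hι.extend_apply]
    · simp [extend_apply' _ _ _ hi]
  · rw [h_abs, tsum_extend_zero hι]

theorem ENNReal.ofReal_toReal_inv_mul_le_one (b : ℝ≥0∞) :
    ENNReal.ofReal b.toReal⁻¹ * b ≤ 1 := by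
  rcases eq_or_ne b 0 with rfl | hb0
  · simp
  rcases eq_or_ne b ∞ with rfl | hbt
  · simp
  rw [ENNReal.ofReal_inv_of_pos (ENNReal.toReal_pos hb0 hbt), ENNReal.ofReal_toReal hbt,
    ENNReal.inv_mul_cancel hb0 hbt]

theorem HNorm_le_tsum_eLpNorm_indicator_unitCube {n : ℕ} {p : ℝ} (ϱ : ℝ) (hp : 0 < p)
    {f : EuclideanSpace ℝ (Fin n) → ℝ} (hf : AEStronglyMeasurable f volume) :
    HNorm n p ϱ f ≤ ∑' M, eLpNorm ((unitCube M).indicator f) (ENNReal.ofReal p) volume := by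
  set b : (Fin n → ℤ) → ℝ≥0∞ :=
    fun M => eLpNorm ((unitCube M).indicator f) (ENNReal.ofReal p) volume
  rcases eq_or_ne (∑' M, b M) ∞ with hsum | hsum
  · exact hsum ▸ le_top
  have hb : ∀ M, b M ≠ ∞ := fun M => ne_top_of_le_ne_top hsum (ENNReal.le_tsum M)
  -- where `b M = 0`, the junk value `0⁻¹ = 0` makes the atom vanish
  set a : (Fin n → ℤ) → EuclideanSpace ℝ (Fin n) → ℝ :=
    fun M => (b M).toReal⁻¹ • (unitCube M).indicator f
  have ha_supp : ∀ M, tsupport (a M) ⊆ dyadicCube n (0, M) := fun M =>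
    (tsupport_smul_subset_right (fun _ => (b M).toReal⁻¹) _).trans <| closure_minimal
      (Set.support_indicator_subset.trans (unitCube_subset_dyadicCube M)) (isClosed_dyadicCube _)
  have ha_norm : ∀ M, eLpNorm (a M) (ENNReal.ofReal p) volume ≤ 1 := fun M => by
    rw [eLpNorm_const_smul, Real.enorm_of_nonneg (by positivity)]
    exact ENNReal.ofReal_toReal_inv_mul_le_one _
  have hb_zero : ∀ᵐ x ∂volume, ∀ M, b M = 0 → (unitCube M).indicator f x = 0 := by
    refine ae_all_iff.2 fun M => ?_
    rcases eq_or_ne (b M) 0 with hM | hM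
    · filter_upwards [(eLpNorm_eq_zero_iff (hf.indicator (measurableSet_unitCube M))
        (by simpa using hp)).1 hM] with x hx _ using hx
    · exact .of_forall fun x h => absurd h hM
  have hf_rep : ∀ᵐ x ∂volume, f x = ∑' M, (b M).toReal * a M x := by
    filter_upwards [hb_zero] with x hx
    have hx₀ := mem_unitCube_floor x
    rw [tsum_eq_single (fun k => ⌊x k⌋) fun M hM => by
      simp [a, Set.indicator_of_notMem fun h => hM (eq_of_mem_unitCube h hx₀)]]
    rcases eq_or_ne (b fun k => ⌊x k⌋) 0 with h0 | h0
    · simpa [Set.indicator_of_mem hx₀, h0] using hx _ h0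
    · have : (b fun k => ⌊x k⌋).toReal ≠ 0 := (ENNReal.toReal_pos h0 (hb _)).ne'
      simp [a, Set.indicator_of_mem hx₀, this]
  calc HNorm n p ϱ f
      ≤ ENNReal.ofReal (∑' M, |(b M).toReal|) := HNorm_le_of_levelZero_rep _ a ha_supp ha_norm
        (by simpa using ENNReal.summable_toReal hsum) hf_rep
    _ = ∑' M, b M := by
        simp_rw [abs_of_nonneg ENNReal.toReal_nonneg]
        rw [← ENNReal.tsum_toReal_eq hb, ENNReal.ofReal_toReal hsum]

theorem eLpNorm_ofReal_rpow_eq_lintegral {X E : Type*} [MeasurableSpace X] [NormedAddCommGroup E]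
    {μ : Measure X} {p : ℝ} (hp : 0 < p) (g : X → E) :
    eLpNorm g (ENNReal.ofReal p) μ ^ p = ∫⁻ x, ‖g x‖ₑ ^ p ∂μ := by
  rw [eLpNorm_eq_eLpNorm' (by simpa using hp) ENNReal.ofReal_ne_top,
    ENNReal.toReal_ofReal hp.le, lintegral_rpow_enorm_eq_rpow_eLpNorm' hp]

theorem tsum_eLpNorm_indicator_rpow_eq {X E ι : Type*} [MeasurableSpace X] [NormedAddCommGroup E]
    [Countable ι] {μ : Measure X} {S : ι → Set X} (hS : ∀ i, MeasurableSet (S i))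
    (hdisj : Pairwise (Function.onFun Disjoint S)) (hcover : ⋃ i, S i = Set.univ)
    {p : ℝ} (hp : 0 < p) (g : X → E) :
    ∑' i, eLpNorm ((S i).indicator g) (ENNReal.ofReal p) μ ^ p =
      eLpNorm g (ENNReal.ofReal p) μ ^ p := by
  simp_rw [eLpNorm_indicator_eq_eLpNorm_restrict (hS _), eLpNorm_ofReal_rpow_eq_lintegral hp]
  rw [← lintegral_iUnion hS hdisj, hcover, Measure.restrict_univ]

theorem eLpNorm_indicator_unitCube_le_weighted {n : ℕ} {α : ℝ} (hα : 0 ≤ α)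
    (f : EuclideanSpace ℝ (Fin n) → ℝ) (M : Fin n → ℤ) (q : ℝ≥0∞) :
    eLpNorm ((unitCube M).indicator f) q volume ≤
      ENNReal.ofReal ((2 + 2 * n) ^ (α / 2) * (1 + ∑ k, (M k : ℝ) ^ 2) ^ (-(α / 2))) *
        eLpNorm ((unitCube M).indicator fun x => (1 + ‖x‖ ^ 2) ^ (α / 2) * f x) q volume := by
  refine eLpNorm_le_mul_eLpNorm_of_ae_le_mul (.of_forall fun x => ?_) q
  by_cases hx : x ∈ unitCube M
  · set Q := 1 + ∑ k, (M k : ℝ) ^ 2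
    have hQ : 0 < Q := by positivity
    have hweight : Q ^ (α / 2) ≤ (2 + 2 * n) ^ (α / 2) * (1 + ‖x‖ ^ 2) ^ (α / 2) := by
      rw [← Real.mul_rpow (by positivity) (by positivity)]
      gcongr
      exact one_add_sum_sq_le_of_mem_unitCube hx
    have hcancel : Q ^ (-(α / 2)) * Q ^ (α / 2) = 1 := by
      rw [Real.rpow_neg hQ.le, inv_mul_cancel₀ (by positivity)]
    rw [Set.indicator_of_mem hx, Set.indicator_of_mem hx, norm_mul,
      Real.norm_of_nonneg (by positivity : (0 : ℝ) ≤ (1 + ‖x‖ ^ 2) ^ (α / 2))]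
    calc ‖f x‖ = Q ^ (-(α / 2)) * Q ^ (α / 2) * ‖f x‖ := by rw [hcancel, one_mul]
      _ ≤ Q ^ (-(α / 2)) * ((2 + 2 * n) ^ (α / 2) * (1 + ‖x‖ ^ 2) ^ (α / 2)) * ‖f x‖ :=
        by gcongr
      _ = _ := by ring
  · simp only [Set.indicator_of_notMem hx, norm_zero, mul_zero, le_refl]

theorem tsum_eLpNorm_indicator_unitCube_le_weighted {n : ℕ} {p p' α : ℝ}
    (hpq : p.HolderConjugate p') (hα : 0 ≤ α) (f : EuclideanSpace ℝ (Fin n) → ℝ) :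
    ∑' M, eLpNorm ((unitCube M).indicator f) (ENNReal.ofReal p) volume ≤
      ENNReal.ofReal ((2 + 2 * n) ^ (α / 2)) *
        (∑' M : Fin n → ℤ, ENNReal.ofReal ((1 + ∑ k, (M k : ℝ) ^ 2) ^ (-(α * p' / 2)))) ^
          (1 / p') *
        eLpNorm (fun x => (1 + ‖x‖ ^ 2) ^ (α / 2) * f x) (ENNReal.ofReal p) volume := by
  set g : EuclideanSpace ℝ (Fin n) → ℝ := fun x => (1 + ‖x‖ ^ 2) ^ (α / 2) * f x
  set e : (Fin n → ℤ) → ℝ≥0∞ :=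
    fun M => ENNReal.ofReal ((1 + ∑ k, (M k : ℝ) ^ 2) ^ (-(α / 2)))
  set d : (Fin n → ℤ) → ℝ≥0∞ :=
    fun M => eLpNorm ((unitCube M).indicator g) (ENNReal.ofReal p) volume
  have he : ∀ M, e M ^ p' = ENNReal.ofReal ((1 + ∑ k, (M k : ℝ) ^ 2) ^ (-(α * p' / 2))) := by
    intro M
    rw [ENNReal.ofReal_rpow_of_nonneg (by positivity) hpq.symm.nonneg, ← Real.rpow_mul
      (by positivity)]
    ring_nf
  have hd : (∑' M, d M ^ p) ^ (1 / p) = eLpNorm g (ENNReal.ofReal p) volume := by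
    rw [tsum_eLpNorm_indicator_rpow_eq measurableSet_unitCube pairwise_disjoint_unitCube
      iUnion_unitCube hpq.pos, one_div, ENNReal.rpow_rpow_inv hpq.ne_zero]
  calc ∑' M, eLpNorm ((unitCube M).indicator f) (ENNReal.ofReal p) volume
      ≤ ∑' M, ENNReal.ofReal ((2 + 2 * n) ^ (α / 2)) * (e M * d M) := by
        refine ENNReal.tsum_le_tsum fun M => ?_
        rw [← mul_assoc, ← ENNReal.ofReal_mul (by positivity)]
        exact eLpNorm_indicator_unitCube_le_weighted hα f M _
    _ = ENNReal.ofReal ((2 + 2 * n) ^ (α / 2)) * ∑' M, e M * d M := ENNReal.tsum_mul_left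
    _ ≤ ENNReal.ofReal ((2 + 2 * n) ^ (α / 2)) *
          ((∑' M, e M ^ p') ^ (1 / p') * (∑' M, d M ^ p) ^ (1 / p)) := by
        gcongr
        exact ENNReal.tsum_mul_le_Lp_mul_Lq hpq.symm e d
    _ = _ := by simp_rw [he, hd, mul_assoc]

theorem weighted_Lp_embeds_predual_morrey_general (n : ℕ) (p p' ϱ α : ℝ)
    (hp : 1 < p) (hp' : 1 / p + 1 / p' = 1) (hα : (n : ℝ) / p' < α) :
    ∃ C : ℝ, 0 < C ∧ ∀ f : EuclideanSpace ℝ (Fin n) → ℝ,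
      MemLp (fun x => (1 + ‖x‖ ^ 2) ^ (α / 2) * f x) (ENNReal.ofReal p) volume →
      HNorm n p ϱ f
        ≤ ENNReal.ofReal C *
            eLpNorm (fun x => (1 + ‖x‖ ^ 2) ^ (α / 2) * f x) (ENNReal.ofReal p) volume := by
  have hpq : p.HolderConjugate p' :=
    Real.holderConjugate_iff.2 ⟨hp, by simpa only [one_div] using hp'⟩
  have hα₀ : 0 ≤ α := (div_nonneg n.cast_nonneg hpq.symm.nonneg).trans hα.le
  have hs : (n : ℝ) / 2 < α * p' / 2 := by
    rw [div_lt_iff₀ hpq.symm.pos] at hα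
    linarith
  set K : ℝ≥0∞ := ENNReal.ofReal ((2 + 2 * n) ^ (α / 2)) *
    (∑' M : Fin n → ℤ, ENNReal.ofReal ((1 + ∑ k, (M k : ℝ) ^ 2) ^ (-(α * p' / 2)))) ^
      (1 / p')
  have hK : K ≠ ∞ := ENNReal.mul_ne_top ENNReal.ofReal_ne_top
    (ENNReal.rpow_ne_top_of_nonneg (by positivity [hpq.symm.pos])
      (tsum_ofReal_one_add_sum_sq_int_rpow_neg_ne_top hs))
  refine ⟨K.toReal + 1, by positivity, fun f hf => ?_⟩
  have hf_meas : AEStronglyMeasurable f volume := by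
    have hw : Continuous fun x : EuclideanSpace ℝ (Fin n) => (1 + ‖x‖ ^ 2) ^ (α / 2) :=
      .rpow_const (by fun_prop) fun x => .inl (by positivity)
    refine (hw.measurable.inv.aestronglyMeasurable.mul hf.1).congr (.of_forall fun x => ?_)
    simp [inv_mul_cancel_left₀ (by positivity : (1 + ‖x‖ ^ 2) ^ (α / 2) ≠ 0)]
  calc HNorm n p ϱ f
      ≤ ∑' M, eLpNorm ((unitCube M).indicator f) (ENNReal.ofReal p) volume :=
        HNorm_le_tsum_eLpNorm_indicator_unitCube ϱ hpq.pos hf_meas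
    _ ≤ K * eLpNorm (fun x => (1 + ‖x‖ ^ 2) ^ (α / 2) * f x) (ENNReal.ofReal p) volume :=
        tsum_eLpNorm_indicator_unitCube_le_weighted hpq hα₀ f
    _ ≤ _ := by
        gcongr
        exact (ENNReal.le_ofReal_iff_toReal_le hK (by positivity)).2 (by linarith)

/-- for `1 < p < ∞`, `-n < ϱ < -n/p` and `α > n/p'`, the weighted Lebesgue space
`L_p(ℝⁿ, w_α)` with `w_α(x) = (1+|x|²)^{α/2}` embeds continuously into `H^ϱ L_p(ℝⁿ)`. -/
theorem weighted_Lp_embeds_predual_morrey (n : ℕ) (hn : 0 < n) (p p' ϱ α : ℝ)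
    (hp : 1 < p) (hϱ1 : -(n : ℝ) < ϱ) (hϱ2 : ϱ < -(n : ℝ) / p)
    (hp' : 1 / p + 1 / p' = 1) (hα : (n : ℝ) / p' < α) :
    ∃ C : ℝ, 0 < C ∧ ∀ f : EuclideanSpace ℝ (Fin n) → ℝ,
      MemLp (fun x => (1 + ‖x‖ ^ 2) ^ (α / 2) * f x) (ENNReal.ofReal p) volume →
      HNorm n p ϱ f
        ≤ ENNReal.ofReal C *
            eLpNorm (fun x => (1 + ‖x‖ ^ 2) ^ (α / 2) * f x) (ENNReal.ofReal p) volume :=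
  weighted_Lp_embeds_predual_morrey_general n p p' ϱ α hp hp' hα
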